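/- (a) For every positive integer N, the set of roots γ ∈ Φ⁺ with height(γ) ≤ N is finite. (b) If α, β, γ ∈ Φ⁺ satisfy γ ∈ Span_{≥0}{α, β} and γ ∉ {α, β}, then height(γ) > min(height(α), height(β)). -/

import Mathlib

/-! Every root is `w • αᵢ` with `w ∈ W`, and the simple reflections preserve both `B` and the
lattice `ℤ³`; so roots have integer coordinates and `Q γ = 1`. Positive roots also have nonnegative
coordinates, so those of height at most `N` lie in the finite box `{0, …, N}³`.

For (b) write `c = s a + t b` with `s, t > 0`, so that `s² + t² + 2 s t B(a, b) = 1`. If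
`B(a, b) ≤ 1` this forces `s + t ≥ 1`, hence `height c ≥ min (height a) (height b)`, with equality
only if `B(a, b) = 1` and `height a = height b`; but then `a - b` is `Q`-isotropic of height `0`,
so `a = b`. If `B(a, b) > 1` then `s + t < 1`, and one uses instead that `B` is Lorentzian with
the height direction timelike: Cauchy–Schwarz on the plane orthogonal to `(1, 1, 1)` gives
`height b * B(a, b) ≤ height a` whenever `height b ≤ height a`, which is what keeps
`s * height a + t * height b` above `height b`. -/

open scoped NNReal

noncomputable section

/-- The ambient vector space `V = ℝ³`. -/
abbrev V : Type := Fin 3 → ℝ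

/-- The symmetric bilinear form with `⟨αᵢ,αⱼ⟩ = 1` if `i = j` and `-1` otherwise. -/
def B (x y : V) : ℝ := 2 * (∑ i, x i * y i) - (∑ i, x i) * (∑ i, y i)

/-- The associated quadratic form. -/
def Q (x : V) : ℝ := B x x

/-- The simple roots `α₁, α₂, α₃` (the standard basis vectors). -/
def α (i : Fin 3) : V := Pi.single i 1

/-- The set of simple roots. -/
def Δ : Set V := Set.range α

/-- `f` is the reflection `r_{αᵢ} : x ↦ x - 2⟨αᵢ,x⟩αᵢ` for some `i` (note `⟨αᵢ,αᵢ⟩ = 1`). -/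
def IsSimpleReflection (f : V ≃ₗ[ℝ] V) : Prop :=
  ∃ i : Fin 3, ∀ x : V, f x = x - (2 * B (α i) x) • α i

/-- The group `W ≤ GL(V)` generated by the three simple reflections:
the standard reflection representation of `U₃`. -/
def W : Subgroup (V ≃ₗ[ℝ] V) := Subgroup.closure {f | IsSimpleReflection f}

/-- The root system `Φ = {w·αᵢ : w ∈ W, i ∈ {1,2,3}}`. -/
def Φ : Set V := {x | ∃ w ∈ W, ∃ i : Fin 3, x = w (α i)}

/-- `Span_{≥0}(X)`: the set of nonnegative linear combinations of elements of `X`. -/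
def nnspan (X : Set V) : Set V := (Submodule.span ℝ≥0 X : Set V)

/-- The positive roots `Φ⁺ = Φ ∩ Span_{≥0}(Δ)`. -/
def Φpos : Set V := Φ ∩ nnspan Δ

/-- `R ⊆ Φ⁺` is closed if for all `a, b ∈ R`, `Span_{≥0}{a,b} ∩ Φ⁺ ⊆ R`. -/
def IsClosedSet (R : Set V) : Prop := ∀ a ∈ R, ∀ b ∈ R, nnspan {a, b} ∩ Φpos ⊆ R

/-- `R` is a biclosed subset of `Φ⁺`. -/
def IsBiclosed (R : Set V) : Prop := R ⊆ Φpos ∧ IsClosedSet R ∧ IsClosedSet (Φpos \ R)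

def height (x : V) : ℝ := ∑ i, x i

lemma height_eq (x : V) : height x = x 0 + x 1 + x 2 := Fin.sum_univ_three x

lemma B_eq (x y : V) :
    B x y = 2 * (x 0 * y 0 + x 1 * y 1 + x 2 * y 2) - height x * height y := by
  simp [B, height, Fin.sum_univ_three]

lemma Q_eq (x : V) : Q x = 2 * (x 0 ^ 2 + x 1 ^ 2 + x 2 ^ 2) - height x ^ 2 := by
  rw [Q, B_eq]; ring

lemma B_comm (x y : V) : B x y = B y x := by
  rw [B_eq, B_eq]; ring

lemma height_smul_add_smul (a b : V) (s t : ℝ) :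
    height (s • a + t • b) = s * height a + t * height b := by
  simp only [height_eq, Pi.add_apply, Pi.smul_apply, smul_eq_mul]; ring

lemma Q_smul_add_smul (a b : V) (s t : ℝ) :
    Q (s • a + t • b) = s ^ 2 * Q a + t ^ 2 * Q b + 2 * s * t * B a b := by
  simp only [Q_eq, B_eq, height_smul_add_smul, Pi.add_apply, Pi.smul_apply, smul_eq_mul]; ring

lemma Q_sub (a b : V) : Q (a - b) = Q a - 2 * B a b + Q b := by
  have h := Q_smul_add_smul a b 1 (-1)
  rw [one_smul, neg_one_smul, ← sub_eq_add_neg] at h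
  rw [h]; ring

lemma B_α_left (i : Fin 3) (x : V) : B (α i) x = 2 * x i - height x := by
  fin_cases i <;> simp [B_eq, height_eq, α]

lemma B_α_α (i : Fin 3) : B (α i) (α i) = 1 := by
  rw [B_α_left]; fin_cases i <;> simp [height_eq, α] <;> norm_num

lemma B_sub_smul_right (x y z : V) (v : ℝ) : B x (y - v • z) = B x y - v * B x z := by
  simp only [B_eq, height_eq, Pi.sub_apply, Pi.smul_apply, smul_eq_mul]; ring

lemma B_sub_smul (x y z : V) (u v : ℝ) :
    B (x - u • z) (y - v • z) = B x y - v * B x z - u * B z y + u * v * B z z := by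
  simp only [B_eq, height_eq, Pi.sub_apply, Pi.smul_apply, smul_eq_mul]; ring

namespace IsSimpleReflection

variable {f : V ≃ₗ[ℝ] V}

lemma B_map (hf : IsSimpleReflection f) (x y : V) : B (f x) (f y) = B x y := by
  obtain ⟨i, hi⟩ := hf
  rw [hi, hi, B_sub_smul, B_α_α, B_comm x (α i)]; ring

lemma apply_apply (hf : IsSimpleReflection f) (x : V) : f (f x) = x := by
  obtain ⟨i, hi⟩ := hf
  have hB : B (α i) (x - (2 * B (α i) x) • α i) = -B (α i) x := by
    rw [B_sub_smul_right, B_α_α]; ring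
  rw [hi, hi, hB]; module

lemma inv_eq (hf : IsSimpleReflection f) : f⁻¹ = f :=
  LinearEquiv.ext fun x => f.symm_apply_eq.2 (hf.apply_apply x).symm

end IsSimpleReflection

lemma B_map_of_mem_W {w : V ≃ₗ[ℝ] V} (hw : w ∈ W) (x y : V) : B (w x) (w y) = B x y := by
  induction hw using Subgroup.closure_induction'' generalizing x y with
  | mem f hf => exact hf.B_map x y
  | inv_mem f hf => rw [hf.inv_eq]; exact hf.B_map x y
  | one => rfl
  | mul f g _ _ hf hg => exact (hf _ _).trans (hg x y)

def intLattice : Set V := {x | ∀ i, x i ∈ (Int.castRingHom ℝ).range}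

lemma α_mem_intLattice (i j : Fin 3) : α i j ∈ (Int.castRingHom ℝ).range := by
  by_cases h : j = i
  · simp [α, h]
  · simp [α, h]

lemma IsSimpleReflection.map_mem_intLattice {f : V ≃ₗ[ℝ] V} (hf : IsSimpleReflection f)
    {x : V} (hx : x ∈ intLattice) : f x ∈ intLattice := by
  obtain ⟨i, hi⟩ := hf
  intro j
  have hh : height x ∈ (Int.castRingHom ℝ).range := Subring.sum_mem _ fun k _ => hx k
  rw [hi, Pi.sub_apply, Pi.smul_apply, smul_eq_mul, B_α_left]
  exact sub_mem (hx j) (mul_mem (mul_mem (ofNat_mem _ 2)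
    (sub_mem (mul_mem (ofNat_mem _ 2) (hx i)) hh)) (α_mem_intLattice i j))

lemma map_mem_intLattice_of_mem_W {w : V ≃ₗ[ℝ] V} (hw : w ∈ W) {x : V} (hx : x ∈ intLattice) :
    w x ∈ intLattice := by
  induction hw using Subgroup.closure_induction'' generalizing x with
  | mem f hf => exact hf.map_mem_intLattice hx
  | inv_mem f hf => rw [hf.inv_eq]; exact hf.map_mem_intLattice hx
  | one => exact hx
  | mul f g _ _ hf hg => exact hf (hg hx)

lemma Q_of_mem_Φ {γ : V} (hγ : γ ∈ Φ) : Q γ = 1 := by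
  obtain ⟨w, hw, i, rfl⟩ := hγ
  rw [Q, B_map_of_mem_W hw, B_α_α]

lemma mem_intLattice_of_mem_Φ {γ : V} (hγ : γ ∈ Φ) : γ ∈ intLattice := by
  obtain ⟨w, hw, i, rfl⟩ := hγ
  exact map_mem_intLattice_of_mem_W hw (α_mem_intLattice i)

lemma nonneg_of_mem_nnspan_Δ {x : V} (hx : x ∈ nnspan Δ) (i : Fin 3) : 0 ≤ x i := by
  induction hx using Submodule.span_induction with
  | mem y hy =>
    obtain ⟨j, rfl⟩ := hy
    by_cases h : i = j <;> simp [α, h]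
  | zero => rfl
  | add y z _ _ hy hz => exact add_nonneg hy hz
  | smul r y _ hy => exact mul_nonneg r.coe_nonneg hy

lemma exists_of_mem_nnspan_pair {a b c : V} (hc : c ∈ nnspan {a, b}) :
    ∃ s t : ℝ, 0 ≤ s ∧ 0 ≤ t ∧ c = s • a + t • b := by
  obtain ⟨s, t, rfl⟩ := Submodule.mem_span_pair.1 hc
  exact ⟨s, t, s.coe_nonneg, t.coe_nonneg, rfl⟩

lemma height_pos_of_mem_Φpos {γ : V} (hγ : γ ∈ Φpos) : 0 < height γ := by
  have hQ := Q_of_mem_Φ hγ.1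
  have h := nonneg_of_mem_nnspan_Δ hγ.2
  rw [Q_eq] at hQ
  rw [height_eq] at hQ ⊢
  nlinarith [h 0, h 1, h 2]

lemma finite_setOf_mem_Φpos_height_le (r : ℝ) : {γ ∈ Φpos | height γ ≤ r}.Finite := by
  refine ((Set.finite_Icc (0 : Fin 3 → ℤ) fun _ => ⌊r⌋).image fun n i => (n i : ℝ)).subset ?_
  rintro γ ⟨hγ, hr⟩
  choose n hn using mem_intLattice_of_mem_Φ hγ.1
  simp only [eq_intCast] at hn
  have hle (i : Fin 3) : γ i ≤ r :=
    (Finset.single_le_sum (fun j _ => nonneg_of_mem_nnspan_Δ hγ.2 j) (Finset.mem_univ i)).trans hr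
  refine ⟨n, ⟨fun i => ?_, fun i => ?_⟩, funext hn⟩
  · exact_mod_cast (hn i).symm ▸ nonneg_of_mem_nnspan_Δ hγ.2 i
  · exact Int.le_floor.2 ((hn i).symm ▸ hle i)

/-- `B + height ⊗ height / 3` is twice the Euclidean inner product of the components orthogonal
to `(1,1,1)`, hence positive semidefinite. -/
lemma sq_B_add_le (x y : V) :
    (B x y + height x * height y / 3) ^ 2 ≤
      (Q x + height x ^ 2 / 3) * (Q y + height y ^ 2 / 3) := by
  rw [Q_eq, Q_eq, B_eq, height_eq, height_eq]
  nlinarith [sq_nonneg ((x 0 - x 1) * (y 1 - y 2) - (x 1 - x 2) * (y 0 - y 1)),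
    sq_nonneg ((x 0 - x 1) * (y 0 - y 2) - (x 0 - x 2) * (y 0 - y 1)),
    sq_nonneg ((x 1 - x 2) * (y 0 - y 2) - (x 0 - x 2) * (y 1 - y 2))]

lemma height_mul_B_le {a b : V} (ha : Q a = 1) (hb : Q b = 1) (hb0 : 0 ≤ height b)
    (hba : height b ≤ height a) : height b * B a b ≤ height a := by
  set p := height a
  set q := height b
  have hcs := sq_B_add_le a b
  rw [ha, hb] at hcs
  have hsq : (q * (B a b + p * q / 3)) ^ 2 ≤ (p * (1 + q ^ 2 / 3)) ^ 2 := by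
    have hpq : q ^ 2 * (1 + p ^ 2 / 3) ≤ p ^ 2 * (1 + q ^ 2 / 3) := by nlinarith
    calc (q * (B a b + p * q / 3)) ^ 2 ≤ q ^ 2 * ((1 + p ^ 2 / 3) * (1 + q ^ 2 / 3)) := by
          rw [mul_pow]; gcongr
      _ ≤ (p * (1 + q ^ 2 / 3)) ^ 2 := by nlinarith
  nlinarith [le_of_sq_le_sq hsq (mul_nonneg (hb0.trans hba) (by positivity))]

lemma eq_of_B_eq_one {a b : V} (ha : Q a = 1) (hb : Q b = 1) (hab : B a b = 1)
    (hh : height a = height b) : a = b := by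
  have hQ : Q (a - b) = 0 := by rw [Q_sub, ha, hb, hab]; norm_num
  have hh' : height (a - b) = 0 := by
    rw [height_eq, height_eq] at hh
    rw [height_eq, Pi.sub_apply, Pi.sub_apply, Pi.sub_apply]; linarith
  rw [Q_eq, hh'] at hQ
  simp only [Pi.sub_apply] at hQ
  rw [← sub_eq_zero]
  funext i
  fin_cases i <;> simp <;> nlinarith [sq_nonneg (a 0 - b 0), sq_nonneg (a 1 - b 1), sq_nonneg (a 2 - b 2)]

lemma smul_eq_self_of_Q_eq_one {x : V} {t : ℝ} (hx : Q x = 1) (htx : Q (t • x) = 1)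
    (ht : 0 ≤ t) : t • x = x := by
  have h := Q_smul_add_smul x x t 0
  rw [zero_smul, add_zero, htx, hx] at h
  have ht1 : t = 1 := by nlinarith
  rw [ht1, one_smul]

lemma lt_mul_add_mul_of_conic {p q s t β : ℝ} (hq : 0 < q) (hqp : q ≤ p) (hqβ : q * β ≤ p)
    (hs : 0 < s) (ht : 0 < t) (hconic : s ^ 2 + t ^ 2 + 2 * s * t * β = 1)
    (hdeg : β = 1 → q ≠ p) : q < s * p + t * q := by
  rcases lt_trichotomy β 1 with hβ | rfl | hβ
  · have hst : 1 < s + t := by nlinarith [mul_pos hs ht]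
    nlinarith
  · have hst : s + t = 1 := by nlinarith
    have hqp' := lt_of_le_of_ne hqp (hdeg rfl)
    nlinarith
  · have hst : s + t < 1 := by nlinarith [mul_pos hs ht]
    have hfactor : (s * p + t * q - q) * (1 + t) = s * (p * (1 + t) - q * s - 2 * q * t * β) := by
      linear_combination q * hconic
    have hpos : 0 < p * (1 + t) - q * s - 2 * q * t * β := by nlinarith
    nlinarith [mul_pos hs hpos]

lemma min_height_lt_of_mem_nnspan_pair {a b c : V} (ha : a ∈ Φpos) (hb : b ∈ Φpos)
    (hc : c ∈ Φpos) (hspan : c ∈ nnspan {a, b}) (hca : c ≠ a) (hcb : c ≠ b) :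
    min (height a) (height b) < height c := by
  wlog hba : height b ≤ height a generalizing a b
  · rw [min_comm]
    exact this hb ha (by rwa [Set.pair_comm]) hcb hca (le_of_not_ge hba)
  obtain ⟨s, t, hs, ht, rfl⟩ := exists_of_mem_nnspan_pair hspan
  have hQa := Q_of_mem_Φ ha.1
  have hQb := Q_of_mem_Φ hb.1
  have hQc := Q_of_mem_Φ hc.1
  have hs' : 0 < s := by
    refine hs.lt_of_ne' fun hs0 => hcb ?_
    rw [hs0, zero_smul, zero_add] at hQc ⊢
    exact smul_eq_self_of_Q_eq_one hQb hQc ht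
  have ht' : 0 < t := by
    refine ht.lt_of_ne' fun ht0 => hca ?_
    rw [ht0, zero_smul, add_zero] at hQc ⊢
    exact smul_eq_self_of_Q_eq_one hQa hQc hs
  have hconic : s ^ 2 + t ^ 2 + 2 * s * t * B a b = 1 := by
    rw [← hQc, Q_smul_add_smul, hQa, hQb]; ring
  have hdeg : B a b = 1 → height b ≠ height a := by
    intro hB hh
    obtain rfl := eq_of_B_eq_one hQa hQb hB hh.symm
    rw [← add_smul] at hQc hca
    exact hca (smul_eq_self_of_Q_eq_one hQa hQc (by positivity))
  have hq := height_pos_of_mem_Φpos hb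
  rw [min_eq_right hba, height_smul_add_smul]
  exact lt_mul_add_mul_of_conic hq hba (height_mul_B_le hQa hQb hq.le hba) hs' ht' hconic hdeg

/-- (a) There are finitely many positive roots of height at most `N`.
(b) If `c ∈ Span_{≥0}{a,b}` is a positive root distinct from positive roots `a, b`,
then `height(c) > min(height(a), height(b))`. -/
theorem height_statistics :
    (∀ N : ℕ, 0 < N → {γ ∈ Φpos | (∑ i, γ i) ≤ (N : ℝ)}.Finite) ∧
    (∀ a b c : V, a ∈ Φpos → b ∈ Φpos → c ∈ Φpos →
      c ∈ nnspan {a, b} → c ≠ a → c ≠ b →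
      min (∑ i, a i) (∑ i, b i) < ∑ i, c i) :=
  ⟨fun N _ => finite_setOf_mem_Φpos_height_le N,
    fun _ _ _ ha hb hc => min_height_lt_of_mem_nnspan_pair ha hb hc⟩
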